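/- arXiv:2006.12032 — 5 statements merged into one kernel-verified Lean document; each statement's English description precedes it below -/
import Mathlib

section
/- Let α ∈ (0,1) and define the memory weights φ_α(k,m) = ((1-α)/(2-α-α^m)) · Π_{j=m+1}^{k} (1-α^{j-1})/(2-α-α^j). For any fixed k ≥ 2 and 1 ≤ m < k, φ_α(k,m) < φ_α(k,m+1); i.e., more recent rewards receive strictly larger weight. -/
open Finset

/-- More recent rewards receive strictly larger memory weight:
φ_α(k,m) < φ_α(k,m+1) for 1 ≤ m < k. -/
theorem sisyphus_weights_increasing (α : ℝ) (hα : α ∈ Set.Ioo (0:ℝ) 1)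
    (k m : ℕ) (hk : 2 ≤ k) (hm : 1 ≤ m) (hmk : m < k) :
    (1 - α) / (2 - α - α ^ m) *
        ∏ j ∈ Finset.Icc (m + 1) k, (1 - α ^ (j - 1)) / (2 - α - α ^ j) <
    (1 - α) / (2 - α - α ^ (m + 1)) *
        ∏ j ∈ Finset.Icc (m + 2) k, (1 - α ^ (j - 1)) / (2 - α - α ^ j) := by
  obtain ⟨hα0, hα1⟩ := hα
  have hpow : ∀ n : ℕ, 1 ≤ n → α ^ n < 1 := fun n hn =>
    pow_lt_one₀ hα0.le hα1 (by omega)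
  have hden : ∀ n : ℕ, 1 ≤ n → 0 < 2 - α - α ^ n := fun n hn => by
    have := hpow n hn; linarith
  have hP : 0 < ∏ j ∈ Finset.Icc (m + 2) k, (1 - α ^ (j - 1)) / (2 - α - α ^ j) := by
    apply Finset.prod_pos
    intro j hj
    simp only [Finset.mem_Icc] at hj
    have h1 : α ^ (j - 1) < 1 := hpow _ (by omega)
    have h2 : 0 < 2 - α - α ^ j := hden _ (by omega)
    exact div_pos (by linarith) h2
  have hsplit : Finset.Icc (m + 1) k = insert (m + 1) (Finset.Icc (m + 2) k) := by
    ext x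
    simp only [Finset.mem_Icc, Finset.mem_insert]
    omega
  rw [hsplit, Finset.prod_insert (by simp)]
  have hm1 : (m + 1) - 1 = m := by omega
  rw [hm1]
  have hd1 := hden m hm
  have hd2 := hden (m + 1) (by omega)
  have hαm := hpow m hm
  have key : (1 - α) / (2 - α - α ^ m) * ((1 - α ^ m) / (2 - α - α ^ (m + 1)))
      < (1 - α) / (2 - α - α ^ (m + 1)) := by
    rw [div_mul_div_comm, div_lt_div_iff₀ (by positivity) hd2]
    have h1α : 0 < 1 - α := by linarith
    nlinarith [mul_pos h1α hd2, mul_pos (mul_pos h1α hd2) hd1]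
  calc (1 - α) / (2 - α - α ^ m) *
        ((1 - α ^ m) / (2 - α - α ^ (m + 1)) *
          ∏ j ∈ Finset.Icc (m + 2) k, (1 - α ^ (j - 1)) / (2 - α - α ^ j))
      = (1 - α) / (2 - α - α ^ m) * ((1 - α ^ m) / (2 - α - α ^ (m + 1))) *
          ∏ j ∈ Finset.Icc (m + 2) k, (1 - α ^ (j - 1)) / (2 - α - α ^ j) := by ring
    _ < _ := by exact mul_lt_mul_of_pos_right key hP
end

section
/- Let α ∈ [0,1) and let S(k) be the total memory weight defined by S(1) = 1/2 and S(k) = ((1-α^{k-1})/(2-α-α^k))·S(k-1) + (1-α)/(2-α-α^k). Then S(k) ≤ 1/(1+α^k) for all k ≥ 1; in particular S(k) < 1. -/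
/-! `1 / (1 + α ^ k)` is exactly the fixed point of the affine map taking `S k` to `S (k + 1)`;
that map is increasing, so `S k ≤ 1 / (1 + α ^ k)` propagates to
`S (k + 1) ≤ 1 / (1 + α ^ k) ≤ 1 / (1 + α ^ (k + 1))`. Its coefficients sum to at most `1`,
which propagates `S k < 1` (the first bound alone only gives `S k ≤ 1` when `α = 0`). -/

namespace Sisyphus

/-- `step α k` maps `S (k - 1)` to `S k`. -/
noncomputable def step (α : ℝ) (k : ℕ) (x : ℝ) : ℝ :=
  (1 - α ^ (k - 1)) / (2 - α - α ^ k) * x + (1 - α) / (2 - α - α ^ k)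

variable {α : ℝ}

lemma two_sub_sub_pow_pos (hα0 : 0 ≤ α) (hα1 : α < 1) (k : ℕ) : 0 < 2 - α - α ^ k := by
  have : α ^ k ≤ 1 := pow_le_one₀ hα0 hα1.le
  linarith

lemma step_one_div_one_add_pow (hα0 : 0 ≤ α) (hα1 : α < 1) (k : ℕ) :
    step α (k + 1) (1 / (1 + α ^ k)) = 1 / (1 + α ^ k) := by
  have hd := (two_sub_sub_pow_pos hα0 hα1 (k + 1)).ne'
  have hp : (1 : ℝ) + α ^ k ≠ 0 := by positivity
  rw [step, Nat.add_sub_cancel]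
  field_simp
  ring

lemma step_mono (hα0 : 0 ≤ α) (hα1 : α < 1) (k : ℕ) : Monotone (step α (k + 1)) := by
  intro x y hxy
  have hc : 0 ≤ 1 - α ^ k := sub_nonneg.2 (pow_le_one₀ hα0 hα1.le)
  have hd := two_sub_sub_pow_pos hα0 hα1 (k + 1)
  unfold step
  gcongr

lemma step_lt_one (hα0 : 0 ≤ α) (hα1 : α < 1) {k : ℕ} (hk : k ≠ 0) {x : ℝ} (hx : x < 1) :
    step α (k + 1) x < 1 := by
  have hd := two_sub_sub_pow_pos hα0 hα1 (k + 1)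
  have hαk : α ^ (k + 1) ≤ α ^ k := pow_le_pow_of_le_one hα0 hα1.le k.le_succ
  have hc : 0 < 1 - α ^ k := sub_pos.2 (pow_lt_one₀ hα0 hα1 hk)
  rw [step, Nat.add_sub_cancel, div_mul_eq_mul_div, ← add_div, div_lt_one hd]
  nlinarith

end Sisyphus

open Sisyphus in
/-- The total memory weight satisfies S(k) ≤ 1/(1+α^k), in particular S(k) < 1. -/
theorem sisyphus_total_weight_bound (α : ℝ) (hα : α ∈ Set.Ico (0:ℝ) 1)
    (S : ℕ → ℝ) (hS1 : S 1 = 1 / 2)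
    (hrec : ∀ k, 2 ≤ k → S k = (1 - α ^ (k - 1)) / (2 - α - α ^ k) * S (k - 1)
        + (1 - α) / (2 - α - α ^ k)) :
    ∀ k, 1 ≤ k → S k ≤ 1 / (1 + α ^ k) ∧ S k < 1 := by
  obtain ⟨hα0, hα1⟩ := hα
  intro k hk
  induction k, hk using Nat.le_induction with
  | base =>
    rw [hS1, pow_one]
    constructor
    · gcongr; linarith
    · norm_num
  | succ k hk ih =>
    have hS : S (k + 1) = step α (k + 1) (S k) := hrec (k + 1) (by omega)
    refine ⟨?_, hS ▸ step_lt_one hα0 hα1 (by omega) ih.2⟩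
    calc S (k + 1) = step α (k + 1) (S k) := hS
      _ ≤ step α (k + 1) (1 / (1 + α ^ k)) := step_mono hα0 hα1 k ih.1
      _ = 1 / (1 + α ^ k) := step_one_div_one_add_pow hα0 hα1 k
      _ ≤ 1 / (1 + α ^ (k + 1)) := one_div_le_one_div_of_le (by positivity)
        (add_le_add_right (pow_le_pow_of_le_one hα0 hα1.le k.le_succ) 1)
end

section
/- Let α ∈ [0,1) and let S(k) be defined by S(1) = 1/2 and the recursion S(k) = ((1-α^{k-1})/(2-α-α^k))·S(k-1) + (1-α)/(2-α-α^k). Then S(k) → 1 as k → ∞. -/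
open Filter

/-- The total memory weight S(k) tends to 1 as k → ∞. -/
theorem sisyphus_total_weight_limit (α : ℝ) (hα : α ∈ Set.Ico (0:ℝ) 1)
    (S : ℕ → ℝ) (hS1 : S 1 = 1 / 2)
    (hrec : ∀ k, 2 ≤ k → S k = (1 - α ^ (k - 1)) / (2 - α - α ^ k) * S (k - 1)
        + (1 - α) / (2 - α - α ^ k)) :
    Filter.Tendsto S Filter.atTop (nhds 1) := by
  obtain ⟨hα0, hα1⟩ := hα
  set r : ℝ := max (1 / (2 - α)) α with hr_def
  have h2α : (0:ℝ) < 2 - α := by linarith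
  have hr0 : 0 < r := lt_of_lt_of_le (by positivity) (le_max_left _ _)
  have hr1 : r < 1 := by
    apply max_lt _ hα1
    rw [div_lt_one h2α]; linarith
  have hαr : α ≤ r := le_max_right _ _
  have hir : 1 / (2 - α) ≤ r := le_max_left _ _
  -- denominators are bounded below
  have hd : ∀ k : ℕ, 1 - α ≤ 2 - α - α ^ k := by
    intro k
    have : α ^ k ≤ 1 := pow_le_one₀ hα0 hα1.le
    linarith
  have hdpos : ∀ k : ℕ, 0 < 2 - α - α ^ k := fun k => lt_of_lt_of_le (by linarith) (hd k)
  -- key induction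
  have key : ∀ k : ℕ, 1 ≤ k → 0 ≤ 1 - S k ∧ 1 - S k ≤ (k : ℝ) * r ^ (k - 1) := by
    intro k hk
    induction k, hk using Nat.le_induction with
    | base =>
      constructor
      · rw [hS1]; norm_num
      · rw [hS1]; norm_num
    | succ k hk IH =>
      obtain ⟨IH0, IHb⟩ := IH
      have hpk : 0 ≤ α ^ k := pow_nonneg hα0 k
      have hpk1 : α ^ k ≤ 1 := pow_le_one₀ hα0 hα1.le
      have hD := hdpos (k + 1)
      have hDne : (2 - α - α ^ (k + 1)) ≠ 0 := ne_of_gt hD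
      have h1 : 1 - S (k + 1)
          = (1 - α ^ k) / (2 - α - α ^ (k + 1)) * (1 - S k)
            + α ^ k * (1 - α) / (2 - α - α ^ (k + 1)) := by
        rw [hrec (k + 1) (by omega)]
        simp only [Nat.add_sub_cancel]
        field_simp
        ring
      have hA0 : 0 ≤ (1 - α ^ k) / (2 - α - α ^ (k + 1)) := by
        apply div_nonneg (by linarith) hD.le
      have hB0 : 0 ≤ α ^ k * (1 - α) / (2 - α - α ^ (k + 1)) := by
        apply div_nonneg (by nlinarith) hD.le
      constructor
      · rw [h1]
        have := mul_nonneg hA0 IH0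
        linarith
      · -- A ≤ r
        have hA : (1 - α ^ k) / (2 - α - α ^ (k + 1)) ≤ r := by
          refine le_trans ?_ hir
          rw [div_le_div_iff₀ hD h2α]
          have : α ^ (k + 1) = α ^ k * α := pow_succ α k
          nlinarith
        -- B ≤ r ^ k
        have hB : α ^ k * (1 - α) / (2 - α - α ^ (k + 1)) ≤ r ^ k := by
          have h1' : α ^ k * (1 - α) / (2 - α - α ^ (k + 1)) ≤ α ^ k := by
            rw [div_le_iff₀ hD]
            nlinarith [hd (k + 1), hpk]
          exact h1'.trans (pow_le_pow_left₀ hα0 hαr k)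
        rw [h1]
        have hstep : (1 - α ^ k) / (2 - α - α ^ (k + 1)) * (1 - S k)
            ≤ r * ((k : ℝ) * r ^ (k - 1)) := by
          apply mul_le_mul hA IHb IH0 hr0.le
        have hrr : r * ((k : ℝ) * r ^ (k - 1)) = (k : ℝ) * r ^ k := by
          rw [mul_comm r, mul_assoc, ← pow_succ]
          congr 2
          omega
        rw [hrr] at hstep
        have he : k + 1 - 1 = k := rfl
        rw [he]
        push_cast
        linarith
  -- squeeze
  have hsq : Tendsto (fun k : ℕ => 1 - S k) atTop (nhds 0) := by
    have hg : Tendsto (fun k : ℕ => (k : ℝ) * r ^ (k - 1)) atTop (nhds 0) := by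
      have h := (tendsto_self_mul_const_pow_of_lt_one hr0.le hr1).const_mul (1 / r)
      rw [mul_zero] at h
      apply squeeze_zero' (Filter.eventually_atTop.2 ⟨1, fun k hk => by positivity⟩)
        (Filter.eventually_atTop.2 ⟨1, fun k hk => ?_⟩) h
      apply le_of_eq
      have hpk : r ^ k = r ^ (k - 1) * r := by
        rw [← pow_succ]
        congr 1
        omega
      rw [hpk]
      field_simp
    exact squeeze_zero' (Filter.eventually_atTop.2 ⟨1, fun k hk => (key k hk).1⟩)
      (Filter.eventually_atTop.2 ⟨1, fun k hk => (key k hk).2⟩) hg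
  have : Tendsto (fun k : ℕ => 1 - (1 - S k)) atTop (nhds (1 - 0)) :=
    tendsto_const_nhds.sub hsq
  simpa using this
end

section
/- For fixed k ≥ 1 and fixed 1 ≤ m ≤ k, we have lim_{α→1⁻} (1-α)/(2-α-α^m) = 1/(1+m) and lim_{α→1⁻} (1-α^{j-1})/(2-α-α^j) = (j-1)/(j+1), hence the memory weight φ_α(k,m) satisfies lim_{α→1⁻} φ_α(k,m) = (1/(1+m)) · Π_{j=m+1}^{k} (j-1)/(j+1) = m/(k(k+1)). -/
open Finset Filter

private lemma geo_fact (x : ℝ) (n : ℕ) : 1 - x ^ n = (1 - x) * ∑ i ∈ Finset.range n, x ^ i := by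
  linear_combination geom_sum_mul x n

private lemma denom_fact (x : ℝ) (n : ℕ) :
    2 - x - x ^ n = (1 - x) * (1 + ∑ i ∈ Finset.range n, x ^ i) := by
  have := geo_fact x n
  ring_nf
  ring_nf at this
  linarith

private lemma sum_tendsto (n : ℕ) :
    Filter.Tendsto (fun α : ℝ => ∑ i ∈ Finset.range n, α ^ i) (nhds 1) (nhds (n : ℝ)) := by
  have hc : ContinuousAt (fun α : ℝ => ∑ i ∈ Finset.range n, α ^ i) 1 := by fun_prop
  have := hc.tendsto
  simpa using this

private lemma ratio_tendsto (a b : ℕ) (hb : b ≠ 0) :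
    Filter.Tendsto
      (fun α : ℝ => (1 - α ^ a) / (2 - α - α ^ b))
      (nhdsWithin 1 (Set.Iio 1)) (nhds ((a : ℝ) / (1 + b))) := by
  have heq : ∀ᶠ α in nhdsWithin (1:ℝ) (Set.Iio 1),
      (∑ i ∈ Finset.range a, α ^ i) / (1 + ∑ i ∈ Finset.range b, α ^ i)
        = (1 - α ^ a) / (2 - α - α ^ b) := by
    filter_upwards [self_mem_nhdsWithin] with α hα
    have h1 : (1 : ℝ) - α ≠ 0 := sub_ne_zero.mpr (ne_of_gt (show α < 1 from hα))
    rw [geo_fact, denom_fact, mul_div_mul_left _ _ h1]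
  refine Tendsto.congr' heq ?_
  have hb' : (1 : ℝ) + b ≠ 0 := by positivity
  have h := Tendsto.div (sum_tendsto a)
    (tendsto_const_nhds.add (sum_tendsto b)) hb'
  exact (h.mono_left nhdsWithin_le_nhds)

private lemma telescope (m : ℕ) (hm : 1 ≤ m) : ∀ k, m ≤ k →
    ∏ j ∈ Finset.Icc (m + 1) k, (((j : ℝ) - 1) / ((j : ℝ) + 1))
      = ((m : ℝ) * (m + 1)) / (k * (k + 1)) := by
  intro k
  induction k with
  | zero => intro h; omega
  | succ n ih =>
    intro h
    rcases Nat.lt_or_ge n m with h1 | h1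
    · have : m = n + 1 := by omega
      subst this
      rw [Finset.Icc_eq_empty (by omega)]
      have : ((n : ℝ) + 1) * ((n : ℝ) + 1 + 1) ≠ 0 := by positivity
      field_simp
      exact Finset.prod_empty
    · rw [Finset.prod_Icc_succ_top (by omega), ih h1]
      have hn : (1 : ℝ) ≤ (n : ℝ) := by exact_mod_cast le_trans hm h1
      have h0 : (n : ℝ) ≠ 0 := by linarith
      have h2 : (n : ℝ) + 1 ≠ 0 := by linarith
      have h3 : (n : ℝ) + 1 + 1 ≠ 0 := by linarith
      push_cast
      field_simp
      ring

/-- As the retention rate α → 1⁻, the memory weight φ_α(k,m) tends to m/(k(k+1)):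
the factor limits are 1/(1+m) and (j-1)/(j+1), and the product telescopes. -/
theorem sisyphus_weight_limit_alpha_one (k m : ℕ) (hm : 1 ≤ m) (hmk : m ≤ k) :
    Filter.Tendsto (fun α : ℝ => (1 - α) / (2 - α - α ^ m))
      (nhdsWithin 1 (Set.Iio 1)) (nhds (1 / (1 + m : ℝ))) ∧
    (∀ j : ℕ, 2 ≤ j →
      Filter.Tendsto (fun α : ℝ => (1 - α ^ (j - 1)) / (2 - α - α ^ j))
        (nhdsWithin 1 (Set.Iio 1)) (nhds (((j : ℝ) - 1) / ((j : ℝ) + 1)))) ∧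
    (1 / (1 + m : ℝ)) * ∏ j ∈ Finset.Icc (m + 1) k, (((j : ℝ) - 1) / ((j : ℝ) + 1)) =
      (m : ℝ) / (k * (k + 1)) ∧
    Filter.Tendsto (fun α : ℝ =>
        (1 - α) / (2 - α - α ^ m) *
          ∏ j ∈ Finset.Icc (m + 1) k, (1 - α ^ (j - 1)) / (2 - α - α ^ j))
      (nhdsWithin 1 (Set.Iio 1)) (nhds ((m : ℝ) / (k * (k + 1)))) := by
  have hA : Filter.Tendsto (fun α : ℝ => (1 - α) / (2 - α - α ^ m))
      (nhdsWithin 1 (Set.Iio 1)) (nhds (1 / (1 + m : ℝ))) := by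
    have := ratio_tendsto 1 m (by omega)
    simpa using this
  have hB : ∀ j : ℕ, 2 ≤ j →
      Filter.Tendsto (fun α : ℝ => (1 - α ^ (j - 1)) / (2 - α - α ^ j))
        (nhdsWithin 1 (Set.Iio 1)) (nhds (((j : ℝ) - 1) / ((j : ℝ) + 1))) := by
    intro j hj
    have := ratio_tendsto (j - 1) j (by omega)
    have hcast : ((j - 1 : ℕ) : ℝ) = (j : ℝ) - 1 := by
      have : (1 : ℕ) ≤ j := by omega
      push_cast [this]; ring
    rw [hcast, add_comm] at this
    exact this
  have hC : (1 / (1 + m : ℝ)) * ∏ j ∈ Finset.Icc (m + 1) k, (((j : ℝ) - 1) / ((j : ℝ) + 1)) =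
      (m : ℝ) / (k * (k + 1)) := by
    rw [telescope m hm k hmk]
    have hm' : (1 : ℝ) ≤ (m : ℝ) := by exact_mod_cast hm
    have hk' : (1 : ℝ) ≤ (k : ℝ) := by exact_mod_cast le_trans hm hmk
    have h1 : (1 : ℝ) + m ≠ 0 := by linarith
    have h2 : (k : ℝ) ≠ 0 := by linarith
    have h3 : (k : ℝ) + 1 ≠ 0 := by linarith
    field_simp
    ring
  refine ⟨hA, hB, hC, ?_⟩
  have hprod : Filter.Tendsto (fun α : ℝ =>
      ∏ j ∈ Finset.Icc (m + 1) k, (1 - α ^ (j - 1)) / (2 - α - α ^ j))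
      (nhdsWithin 1 (Set.Iio 1))
      (nhds (∏ j ∈ Finset.Icc (m + 1) k, (((j : ℝ) - 1) / ((j : ℝ) + 1)))) := by
    apply tendsto_finset_prod
    intro j hj
    exact hB j (by rw [Finset.mem_Icc] at hj; omega)
  have := hA.mul hprod
  rwa [hC] at this
end

section
/- Let α ∈ [0,1), μ(0)=0, and μ(k) the Sisyphus score of a reward sequence ρ with ρ(m) ∈ [0,1]. If the rewards are eventually constant, ρ(m) = ρ* for all m ≥ M, then μ(k) → ρ* as k → ∞. -/
/-!
Past the change point the error `e k = μ k - ρ*` obeys `e (k+1) = a e k - b ρ*` with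
`a ≤ 1 / (2 - α) < 1` and `b ≤ α ^ k`: a contraction perturbed by a geometrically small term,
so `|e|` decays like `n r ^ n` for `r = max (1 / (2 - α)) α`.
-/

open Filter Topology

theorem abs_le_of_abs_succ_le_mul_add_pow {x : ℕ → ℝ} {r c : ℝ} (hr : 0 ≤ r)
    (h : ∀ n, |x (n + 1)| ≤ r * |x n| + c * r ^ (n + 1)) (n : ℕ) :
    |x n| ≤ (|x 0| + c * n) * r ^ n := by
  induction n with
  | zero => simp
  | succ n ih =>
    calc |x (n + 1)| ≤ r * ((|x 0| + c * n) * r ^ n) + c * r ^ (n + 1) :=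
          (h n).trans (by gcongr)
      _ = (|x 0| + c * (n + 1 : ℕ)) * r ^ (n + 1) := by push_cast; ring

theorem tendsto_zero_of_abs_succ_le_mul_add_pow {x : ℕ → ℝ} {r c : ℝ} (hr₀ : 0 ≤ r)
    (hr₁ : r < 1) (h : ∀ n, |x (n + 1)| ≤ r * |x n| + c * r ^ (n + 1)) :
    Tendsto x atTop (𝓝 0) := by
  have hbound : Tendsto (fun n : ℕ ↦ (|x 0| + c * n) * r ^ n) atTop (𝓝 0) := by
    have hgeom := (tendsto_pow_atTop_nhds_zero_of_lt_one hr₀ hr₁).const_mul |x 0|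
    have hlin := (tendsto_self_mul_const_pow_of_lt_one hr₀ hr₁).const_mul c
    simpa [add_mul, mul_assoc] using hgeom.add hlin
  exact squeeze_zero_norm (abs_le_of_abs_succ_le_mul_add_pow hr₀ h) hbound

/-- One step of the recurrence from `μ k = y` with reward `z`, writing `p` for `α ^ k`. -/
theorem abs_sisyphus_step_sub_le {α p : ℝ} (hα : α ∈ Set.Ico (0 : ℝ) 1)
    (hp : p ∈ Set.Icc (0 : ℝ) 1) (y z : ℝ) :
    |(1 - p) / (2 - α - α * p) * y + (1 - α) / (2 - α - α * p) * z - z|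
      ≤ (2 - α)⁻¹ * |y - z| + p * |z| := by
  obtain ⟨hα₀, hα₁⟩ := hα
  obtain ⟨hp₀, hp₁⟩ := hp
  have hD : 0 < 2 - α - α * p := by nlinarith
  have hcontr : (1 - p) / (2 - α - α * p) ≤ (2 - α)⁻¹ := by
    rw [← one_div, div_le_div_iff₀ hD (by linarith)]
    nlinarith
  have hleak : p * (1 - α) / (2 - α - α * p) ≤ p := by
    rw [div_le_iff₀ hD]
    nlinarith [mul_nonneg hp₀ (sub_nonneg.2 (mul_le_one₀ hα₁.le hp₀ hp₁))]
  have hsplit : (1 - p) / (2 - α - α * p) * y + (1 - α) / (2 - α - α * p) * z - z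
      = (1 - p) / (2 - α - α * p) * (y - z) - p * (1 - α) / (2 - α - α * p) * z := by
    linear_combination z * mul_inv_cancel₀ hD.ne'
  rw [hsplit]
  calc _ ≤ |(1 - p) / (2 - α - α * p) * (y - z)| + |p * (1 - α) / (2 - α - α * p) * z| :=
        abs_sub _ _
    _ = (1 - p) / (2 - α - α * p) * |y - z| + p * (1 - α) / (2 - α - α * p) * |z| := by
        rw [abs_mul, abs_mul, abs_of_nonneg (by positivity),
          abs_of_nonneg (div_nonneg (by nlinarith) hD.le)]
    _ ≤ (2 - α)⁻¹ * |y - z| + p * |z| := by gcongr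

theorem sisyphus_score_tracks_general (α : ℝ) (hα : α ∈ Set.Ico (0:ℝ) 1)
    (ρ μ : ℕ → ℝ)
    (ρstar : ℝ)
    (M : ℕ) (hconst : ∀ m, M ≤ m → ρ m = ρstar)
    (hrec : ∀ k, 1 ≤ k → μ k = (1 - α ^ (k - 1)) / (2 - α - α ^ k) * μ (k - 1)
        + (1 - α) / (2 - α - α ^ k) * ρ k) :
    Filter.Tendsto μ Filter.atTop (nhds ρstar) := by
  obtain ⟨hα₀, hα₁⟩ := hα
  set r := max (2 - α)⁻¹ α
  have hr₁ : r < 1 := max_lt (inv_lt_one_of_one_lt₀ (by linarith)) hα₁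
  have hr₀ : 0 ≤ r := hα₀.trans (le_max_right _ _)
  -- Starting at `M + 1` rather than `M` makes the leak `α ^ (n + M + 1)` at most `r ^ (n + 1)`.
  have hstep : ∀ n, |μ (n + 1 + (M + 1)) - ρstar|
      ≤ r * |μ (n + (M + 1)) - ρstar| + |ρstar| * r ^ (n + 1) := by
    intro n
    have hpow : α ^ (n + (M + 1)) ≤ r ^ (n + 1) :=
      (pow_le_pow_left₀ hα₀ (le_max_right _ _) _).trans
        (pow_le_pow_of_le_one hr₀ hr₁.le (by omega))
    rw [show n + 1 + (M + 1) = n + (M + 1) + 1 by omega, hrec _ (by omega), Nat.add_sub_cancel,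
      pow_succ', hconst _ (by omega)]
    refine (abs_sisyphus_step_sub_le ⟨hα₀, hα₁⟩
      ⟨pow_nonneg hα₀ _, pow_le_one₀ hα₀ hα₁.le⟩ _ _).trans ?_
    rw [mul_comm _ |ρstar|]
    gcongr
    exact le_max_left _ _
  have herr := tendsto_zero_of_abs_succ_le_mul_add_pow
    (x := fun n ↦ μ (n + (M + 1)) - ρstar) hr₀ hr₁ hstep
  rw [tendsto_add_atTop_iff_nat (f := fun k ↦ μ k - ρstar)] at herr
  simpa using herr.add_const ρstar

/-- If the rewards are eventually constant equal to ρ*, the Sisyphus score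
converges to ρ*. -/
theorem sisyphus_score_tracks (α : ℝ) (hα : α ∈ Set.Ico (0:ℝ) 1)
    (ρ μ : ℕ → ℝ) (hρ : ∀ m, ρ m ∈ Set.Icc (0:ℝ) 1)
    (ρstar : ℝ) (hρstar : ρstar ∈ Set.Icc (0:ℝ) 1)
    (M : ℕ) (hconst : ∀ m, M ≤ m → ρ m = ρstar)
    (hμ0 : μ 0 = 0)
    (hrec : ∀ k, 1 ≤ k → μ k = (1 - α ^ (k - 1)) / (2 - α - α ^ k) * μ (k - 1)
        + (1 - α) / (2 - α - α ^ k) * ρ k) :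
    Filter.Tendsto μ Filter.atTop (nhds ρstar) :=
  sisyphus_score_tracks_general α hα ρ μ ρstar M hconst hrec
end
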